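/- Let Q, T ⊆ List A, let QA = {q ++ [a] : q ∈ Q, a ∈ A}, and assume the relevant coproducts and products exist. If the canonical morphism u_{Q ⊆ Q∪QA, T} : N_{Q,T} → N_{Q∪QA, T} (which lies in M) is not an isomorphism, then there exist q ∈ Q and a ∈ A such that the canonical morphism u_{Q ⊆ Q∪{q++[a]}, T} : N_{Q,T} → N_{Q∪{q++[a]}, T} is not an isomorphism. -/

import Mathlib

open CategoryTheory

/-- A factorization system `(E, M)` on a category `C`. -/
structure FactSys {C : Type*} [Category C] (E M : MorphismProperty C) : Prop where
  E_iso : ∀ {X Y : C} (f : X ⟶ Y), IsIso f → E f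
  M_iso : ∀ {X Y : C} (f : X ⟶ Y), IsIso f → M f
  E_comp : ∀ {X Y Z : C} (f : X ⟶ Y) (g : Y ⟶ Z), E f → E g → E (f ≫ g)
  M_comp : ∀ {X Y Z : C} (f : X ⟶ Y) (g : Y ⟶ Z), M f → M g → M (f ≫ g)
  fact : ∀ {X Y : C} (f : X ⟶ Y), ∃ (Z : C) (e : X ⟶ Z) (m : Z ⟶ Y), E e ∧ M m ∧ e ≫ m = f
  diag : ∀ {X Y Z W : C} (e : X ⟶ Y) (m : Z ⟶ W) (u : X ⟶ Z) (v : Y ⟶ W),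
    E e → M m → e ≫ v = u ≫ m → ∃! d : Y ⟶ Z, e ≫ d = u ∧ d ≫ m = v

/-- The setting of the chosen `(E,M)`-factorizations `N Q T` of the canonical morphisms
`c_{Q,T} : ∐_Q X ⟶ ∏_T Y` induced by the language `ℓ`: for every `Q` there is a copower
`P Q` of `X` over `Q` (with injections `ι`), for every `T` a power `R T` of `Y` over `T`
(with projections `π`), and for all `Q, T` a chosen factorization
`e Q T : P Q ⟶ N Q T` in `E`, `m Q T : N Q T ⟶ R T` in `M` of `c_{Q,T}`. -/
structure Setup (A : Type) {C : Type*} [Category C] (E M : MorphismProperty C)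
    (X Y : C) (ℓ : List A → (X ⟶ Y)) where
  P : Set (List A) → C
  ι : ∀ (Q : Set (List A)) (q : List A), q ∈ Q → (X ⟶ P Q)
  hP : ∀ (Q : Set (List A)) (Z : C) (f : ∀ q : List A, q ∈ Q → (X ⟶ Z)),
    ∃! g : P Q ⟶ Z, ∀ (q : List A) (hq : q ∈ Q), ι Q q hq ≫ g = f q hq
  R : Set (List A) → C
  π : ∀ (T : Set (List A)) (t : List A), t ∈ T → (R T ⟶ Y)
  hR : ∀ (T : Set (List A)) (Z : C) (f : ∀ t : List A, t ∈ T → (Z ⟶ Y)),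
    ∃! g : Z ⟶ R T, ∀ (t : List A) (ht : t ∈ T), g ≫ π T t ht = f t ht
  N : Set (List A) → Set (List A) → C
  e : ∀ Q T : Set (List A), P Q ⟶ N Q T
  m : ∀ Q T : Set (List A), N Q T ⟶ R T
  he : ∀ Q T : Set (List A), E (e Q T)
  hm : ∀ Q T : Set (List A), M (m Q T)
  hfact : ∀ (Q T : Set (List A)) (q : List A) (hq : q ∈ Q) (t : List A) (ht : t ∈ T),
    ι Q q hq ≫ e Q T ≫ m Q T ≫ π T t ht = ℓ (q ++ t)

namespace Setup

variable {A : Type} {C : Type*} [Category C] {E M : MorphismProperty C}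
  {X Y : C} {ℓ : List A → (X ⟶ Y)}

/-- `u` is the canonical morphism `u_{Q⊆Q',T} : N Q T ⟶ N Q' T`:
it satisfies `u ∘ e_{Q,T} = e_{Q',T} ∘ (canonical inclusion)` and
`m_{Q',T} ∘ u = m_{Q,T}`. -/
def IsU (S : Setup A E M X Y ℓ) {Q Q' : Set (List A)} (T : Set (List A))
    (h : Q ⊆ Q') (u : S.N Q T ⟶ S.N Q' T) : Prop :=
  (∀ (q : List A) (hq : q ∈ Q),
    S.ι Q q hq ≫ S.e Q T ≫ u = S.ι Q' q (h hq) ≫ S.e Q' T) ∧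
  u ≫ S.m Q' T = S.m Q T

/-- `v` is the canonical morphism `v_{Q,T⊆T'} : N Q T' ⟶ N Q T`:
it satisfies `v ∘ e_{Q,T'} = e_{Q,T}` and
`m_{Q,T} ∘ v = (canonical restriction) ∘ m_{Q,T'}`. -/
def IsV (S : Setup A E M X Y ℓ) {T T' : Set (List A)} (Q : Set (List A))
    (h : T ⊆ T') (v : S.N Q T' ⟶ S.N Q T) : Prop :=
  (S.e Q T' ≫ v = S.e Q T) ∧
  (∀ (t : List A) (ht : t ∈ T),
    v ≫ S.m Q T ≫ S.π T t ht = S.m Q T' ≫ S.π T' t (h ht))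

end Setup

/-!
The comparison map `u : N_{Q,T} ⟶ N_{Q',T}` is invertible as soon as `e_{Q',T} = k ≫ u` for
some `k` extending `e_{Q,T}`: the diagonal filler of the square `e_{Q',T} ≫ m_{Q',T} = k ≫ m_{Q,T}`
is then inverse to `u`, by uniqueness of fillers. As `∐_{Q'} X` is a coproduct, such a `k` exists
once every generator `ι_w ≫ e_{Q',T}` with `w ∈ Q' \ Q` lifts through `u`. For `Q' = Q ∪ QA` and
`w = q ++ [a]`, the map `u` factors as `u_{Q ⊆ Q ∪ {w},T}` followed by `u_{Q ∪ {w} ⊆ Q',T}`, so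
`w` lifts when the first factor is invertible.
-/

namespace FactSys

variable {C : Type*} [Category C] {E M : MorphismProperty C}

lemma eq_id_of_comp_eq (fs : FactSys E M) {P N R : C} {e : P ⟶ N} {m : N ⟶ R}
    (he : E e) (hm : M m) {f : N ⟶ N} (hef : e ≫ f = e) (hfm : f ≫ m = m) : f = 𝟙 N :=
  (fs.diag e m e m he hm rfl).unique ⟨hef, hfm⟩ ⟨Category.comp_id e, Category.id_comp m⟩

lemma isIso_of_lift (fs : FactSys E M) {P P' N N' R : C} {e : P ⟶ N} {m : N ⟶ R}
    {e' : P' ⟶ N'} {m' : N' ⟶ R} (he : E e) (hm : M m) (he' : E e') (hm' : M m')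
    {j : P ⟶ P'} {u : N ⟶ N'} (hue : e ≫ u = j ≫ e') (hum : u ≫ m' = m)
    {k : P' ⟶ N} (hjk : j ≫ k = e) (hku : k ≫ u = e') : IsIso u := by
  have hsq : e' ≫ m' = k ≫ m := by rw [← hum, ← hku, Category.assoc]
  obtain ⟨d, ⟨hd, hdm⟩, -⟩ := fs.diag e' m k m' he' hm hsq
  refine ⟨d, fs.eq_id_of_comp_eq he hm ?_ ?_, fs.eq_id_of_comp_eq he' hm' ?_ ?_⟩
  · rw [reassoc_of% hue, hd, hjk]
  · rw [Category.assoc, hdm, hum]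
  · rw [reassoc_of% hd, hku]
  · rw [Category.assoc, hum, hdm]

end FactSys

namespace Setup

variable {A : Type} {C : Type*} [Category C] {E M : MorphismProperty C}
  {X Y : C} {ℓ : List A → (X ⟶ Y)} (S : Setup A E M X Y ℓ)

lemma P_ext {Q : Set (List A)} {Z : C} {f g : S.P Q ⟶ Z}
    (h : ∀ (q : List A) (hq : q ∈ Q), S.ι Q q hq ≫ f = S.ι Q q hq ≫ g) : f = g := by
  obtain ⟨w, -, hw⟩ := S.hP Q Z (fun q hq => S.ι Q q hq ≫ g)
  rw [hw f h, hw g (fun q hq => rfl)]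

lemma R_ext {T : Set (List A)} {Z : C} {f g : Z ⟶ S.R T}
    (h : ∀ (t : List A) (ht : t ∈ T), f ≫ S.π T t ht = g ≫ S.π T t ht) : f = g := by
  obtain ⟨w, -, hw⟩ := S.hR T Z (fun t ht => g ≫ S.π T t ht)
  rw [hw f h, hw g (fun t ht => rfl)]

lemma exists_inclusion {Q Q' : Set (List A)} (h : Q ⊆ Q') :
    ∃ j : S.P Q ⟶ S.P Q', ∀ (q : List A) (hq : q ∈ Q), S.ι Q q hq ≫ j = S.ι Q' q (h hq) :=
  (S.hP Q (S.P Q') (fun q hq => S.ι Q' q (h hq))).exists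

lemma isU_iff {Q Q' : Set (List A)} {T : Set (List A)} {h : Q ⊆ Q'} {j : S.P Q ⟶ S.P Q'}
    (hj : ∀ (q : List A) (hq : q ∈ Q), S.ι Q q hq ≫ j = S.ι Q' q (h hq))
    (u : S.N Q T ⟶ S.N Q' T) :
    S.IsU T h u ↔ S.e Q T ≫ u = j ≫ S.e Q' T ∧ u ≫ S.m Q' T = S.m Q T := by
  refine and_congr_left fun _ => ⟨fun hu => S.P_ext fun q hq => ?_, fun hu q hq => ?_⟩
  · rw [hu q hq, reassoc_of% (hj q hq)]
  · rw [hu, reassoc_of% (hj q hq)]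

lemma exists_isU (fs : FactSys E M) {Q Q' : Set (List A)} (T : Set (List A)) (h : Q ⊆ Q') :
    ∃ u : S.N Q T ⟶ S.N Q' T, S.IsU T h u := by
  obtain ⟨j, hj⟩ := S.exists_inclusion h
  have hsq : S.e Q T ≫ S.m Q T = (j ≫ S.e Q' T) ≫ S.m Q' T := by
    refine S.P_ext fun q hq => S.R_ext fun t ht => ?_
    simp only [Category.assoc]
    rw [S.hfact Q T q hq t ht, reassoc_of% (hj q hq), S.hfact Q' T q (h hq) t ht]
  obtain ⟨u, hu, -⟩ := fs.diag _ _ _ _ (S.he Q T) (S.hm Q' T) hsq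
  exact ⟨u, (S.isU_iff hj u).2 hu⟩

section

variable {S}

lemma IsU.unique (fs : FactSys E M) {Q Q' T : Set (List A)} {h : Q ⊆ Q'}
    {u u' : S.N Q T ⟶ S.N Q' T} (hu : S.IsU T h u) (hu' : S.IsU T h u') : u = u' := by
  have he : S.e Q T ≫ u = S.e Q T ≫ u' :=
    S.P_ext fun q hq => by rw [hu.1 q hq, hu'.1 q hq]
  exact (fs.diag (S.e Q T) (S.m Q' T) _ (S.m Q T) (S.he Q T) (S.hm Q' T)
    (by rw [← hu.2, Category.assoc])).unique ⟨rfl, hu.2⟩ ⟨he.symm, hu'.2⟩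

lemma IsU.comp {Q Q' Q'' T : Set (List A)} {h : Q ⊆ Q'} {h' : Q' ⊆ Q''}
    {u : S.N Q T ⟶ S.N Q' T} {v : S.N Q' T ⟶ S.N Q'' T} (hu : S.IsU T h u)
    (hv : S.IsU T h' v) : S.IsU T (h.trans h') (u ≫ v) :=
  ⟨fun q hq => by rw [reassoc_of% (hu.1 q hq), hv.1 q (h hq)], by rw [Category.assoc, hv.2, hu.2]⟩

end

lemma isIso_of_forall_exists_lift (fs : FactSys E M) {Q Q' T : Set (List A)} {h : Q ⊆ Q'}
    {u : S.N Q T ⟶ S.N Q' T} (hu : S.IsU T h u)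
    (hlift : ∀ (w : List A) (hw : w ∈ Q'), w ∉ Q →
      ∃ x : X ⟶ S.N Q T, x ≫ u = S.ι Q' w hw ≫ S.e Q' T) : IsIso u := by
  classical
  choose x hx using hlift
  obtain ⟨j, hj⟩ := S.exists_inclusion h
  obtain ⟨k, hk, -⟩ := S.hP Q' (S.N Q T) fun w hw =>
    if hwQ : w ∈ Q then S.ι Q w hwQ ≫ S.e Q T else x w hw hwQ
  have hjk : j ≫ k = S.e Q T :=
    S.P_ext fun q hq => by rw [reassoc_of% (hj q hq), hk, dif_pos hq]
  have hku : k ≫ u = S.e Q' T := S.P_ext fun w hw => by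
    rw [reassoc_of% (hk w hw)]
    split_ifs with hwQ
    · rw [Category.assoc, hu.1 w hwQ]
    · exact hx w hw hwQ
  obtain ⟨hue, hum⟩ := (S.isU_iff hj u).1 hu
  exact fs.isIso_of_lift (S.he Q T) (S.hm Q T) (S.he Q' T) (S.hm Q' T) hue hum hjk hku

lemma exists_lift_of_isIso (fs : FactSys E M) {Q Q'' Q' T : Set (List A)}
    {h : Q ⊆ Q'} {h'' : Q ⊆ Q''} {u : S.N Q T ⟶ S.N Q' T} {u'' : S.N Q T ⟶ S.N Q'' T}
    (hu : S.IsU T h u) (hu'' : S.IsU T h'' u'') [IsIso u''] (h' : Q'' ⊆ Q')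
    {w : List A} (hw : w ∈ Q'') :
    ∃ x : X ⟶ S.N Q T, x ≫ u = S.ι Q' w (h' hw) ≫ S.e Q' T := by
  obtain ⟨v, hv⟩ := S.exists_isU fs T h'
  have huv : u'' ≫ v = u := (hu''.comp hv).unique fs hu
  refine ⟨S.ι Q'' w hw ≫ S.e Q'' T ≫ inv u'', ?_⟩
  rw [← huv, Category.assoc, Category.assoc, IsIso.inv_hom_id_assoc, hv.1 w hw]

end Setup

theorem stmt19_general {A : Type} {C : Type*} [Category C]
    (E M : MorphismProperty C) (fs : FactSys E M) {X Y : C}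
    (ℓ : List A → (X ⟶ Y)) (S : Setup A E M X Y ℓ)
    (Q T : Set (List A))
    (h : ∃ u : S.N Q T ⟶ S.N (Q ∪ {w | ∃ q ∈ Q, ∃ a : A, w = q ++ [a]}) T,
      S.IsU T Set.subset_union_left u ∧ ¬ IsIso u) :
    ∃ (q : List A) (_ : q ∈ Q) (a : A),
      ∃ u' : S.N Q T ⟶ S.N (Q ∪ {q ++ [a]}) T,
        S.IsU T Set.subset_union_left u' ∧ ¬ IsIso u' := by
  by_contra! hiso
  obtain ⟨u, hu, hnot⟩ := h
  refine hnot (S.isIso_of_forall_exists_lift fs hu fun w hw hwQ => ?_)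
  obtain ⟨q, hq, a, rfl⟩ := hw.resolve_left hwQ
  obtain ⟨u', hu'⟩ := S.exists_isU fs T (Q' := Q ∪ {q ++ [a]}) Set.subset_union_left
  have : IsIso u' := hiso q hq a u' hu'
  exact S.exists_lift_of_isIso fs hu hu'
    (Set.union_subset_union_right Q fun _ hw => ⟨q, hq, a, hw⟩) (Or.inr rfl)

/-- if the canonical morphism `u_{Q ⊆ Q∪QA, T} : N_{Q,T} → N_{Q∪QA,T}`
is not an isomorphism, then already for some single word `q ++ [a]` with `q ∈ Q`,
`a ∈ A`, the canonical morphism `u_{Q ⊆ Q∪{q++[a]}, T}` is not an isomorphism. -/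
theorem stmt19 {A : Type} [Fintype A] {C : Type*} [Category C]
    (E M : MorphismProperty C) (fs : FactSys E M) {X Y : C}
    (ℓ : List A → (X ⟶ Y)) (S : Setup A E M X Y ℓ)
    (Q T : Set (List A))
    (h : ∃ u : S.N Q T ⟶ S.N (Q ∪ {w | ∃ q ∈ Q, ∃ a : A, w = q ++ [a]}) T,
      S.IsU T Set.subset_union_left u ∧ ¬ IsIso u) :
    ∃ (q : List A) (_ : q ∈ Q) (a : A),
      ∃ u' : S.N Q T ⟶ S.N (Q ∪ {q ++ [a]}) T,
        S.IsU T Set.subset_union_left u' ∧ ¬ IsIso u' :=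
  stmt19_general E M fs ℓ S Q T h
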